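/- arXiv:2602.04718 — 6 statements merged into one kernel-verified Lean document; each statement's English description precedes it below -/
import Mathlib

section
/- Let D ∈ ℝ^{m×d} be a matrix whose columns f_1, …, f_d all have unit Euclidean norm, and let μ = max_{i≠j} |⟨f_i, f_j⟩| be its self-coherence. If K is a natural number with K < (1/2)(1 + 1/μ), then every K-sparse representation is unique: for any z, z̃ ∈ ℝ^d with D z = D z̃, ‖z‖₀ ≤ K and ‖z̃‖₀ ≤ K, it holds that z = z̃. -/
open Finset

/-- Self-coherence bound for uniqueness of K-sparse representations. -/
theorem stmt_0 (m d K : ℕ) (D : Matrix (Fin m) (Fin d) ℝ) (μ : ℝ)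
    (hunit : ∀ j : Fin d, ∑ k, (D k j) ^ 2 = 1)
    (hμ : IsGreatest {x : ℝ | ∃ i j : Fin d, i ≠ j ∧ x = |∑ k, D k i * D k j|} μ)
    (hK : (K : ℝ) < (1 / 2) * (1 + 1 / μ)) :
    ∀ z z' : Fin d → ℝ, D.mulVec z = D.mulVec z' →
      (Finset.univ.filter fun j => z j ≠ 0).card ≤ K →
      (Finset.univ.filter fun j => z' j ≠ 0).card ≤ K →
      z = z' := by
  intro z z' hDz hz hz'
  by_contra hne
  set w : Fin d → ℝ := z - z' with hwdef
  have hw0 : w ≠ 0 := sub_ne_zero.mpr hne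
  -- μ ≥ 0
  obtain ⟨i₀, j₀, hij₀, hμeq⟩ := hμ.1
  have hμ0 : 0 ≤ μ := hμeq ▸ abs_nonneg _
  -- D w = 0
  have hDw : ∀ k, ∑ j, D k j * w j = 0 := by
    intro k
    have : D.mulVec w k = 0 := by
      rw [hwdef, Matrix.mulVec_sub, hDz, sub_self]; rfl
    simpa [Matrix.mulVec, dotProduct] using this
  -- Gram expansion: ∑ i ∑ j w i * w j * g i j = ∑ k (∑ j D k j * w j)^2 = 0
  have key : ∑ i, ∑ j, w i * w j * (∑ k, D k i * D k j) = 0 := by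
    have expand : ∑ i, ∑ j, w i * w j * (∑ k, D k i * D k j)
        = ∑ k, (∑ j, D k j * w j) ^ 2 := by
      calc ∑ i, ∑ j, w i * w j * (∑ k, D k i * D k j)
          = ∑ i, ∑ j, ∑ k, (D k i * w i) * (D k j * w j) := by
            refine Finset.sum_congr rfl fun i _ => Finset.sum_congr rfl fun j _ => ?_
            rw [Finset.mul_sum]
            exact Finset.sum_congr rfl fun k _ => by ring
        _ = ∑ i, ∑ k, ∑ j, (D k i * w i) * (D k j * w j) :=
            Finset.sum_congr rfl fun i _ => Finset.sum_comm
        _ = ∑ k, ∑ i, ∑ j, (D k i * w i) * (D k j * w j) := Finset.sum_comm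
        _ = ∑ k, (∑ j, D k j * w j) ^ 2 := by
            refine Finset.sum_congr rfl fun k _ => ?_
            rw [sq, Finset.sum_mul_sum]
    rw [expand]
    simp [hDw]
  -- bound |g i j| ≤ μ for i ≠ j
  have hg : ∀ i j : Fin d, i ≠ j → |∑ k, D k i * D k j| ≤ μ :=
    fun i j hij => hμ.2 ⟨i, j, hij, rfl⟩
  -- split into diagonal and off-diagonal
  have hdiag : ∀ i : Fin d, ∑ k, D k i * D k i = 1 := by
    intro i; simpa [sq] using hunit i
  have split : ∀ i : Fin d, ∑ j, w i * w j * (∑ k, D k i * D k j)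
      = w i ^ 2 + ∑ j ∈ Finset.univ.erase i, w i * w j * (∑ k, D k i * D k j) := by
    intro i
    rw [← Finset.add_sum_erase Finset.univ _ (Finset.mem_univ i), hdiag i]
    ring_nf
  -- off-diagonal lower bound
  have hoff : ∀ i : Fin d, -(μ * ∑ j ∈ Finset.univ.erase i, |w i| * |w j|)
      ≤ ∑ j ∈ Finset.univ.erase i, w i * w j * (∑ k, D k i * D k j) := by
    intro i
    rw [Finset.mul_sum, ← Finset.sum_neg_distrib]
    refine Finset.sum_le_sum fun j hj => ?_
    have hij : i ≠ j := fun h => (Finset.mem_erase.mp hj).1 h.symm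
    have h1 : |w i * w j * (∑ k, D k i * D k j)| ≤ μ * (|w i| * |w j|) := by
      rw [abs_mul, abs_mul]
      rw [mul_comm μ]
      exact mul_le_mul_of_nonneg_left (hg i j hij) (by positivity)
    nlinarith [neg_abs_le (w i * w j * (∑ k, D k i * D k j))]
  -- combine: 0 ≥ ∑ w² - μ * ∑∑_{j≠i} |w i||w j|
  have comb : ∑ i, w i ^ 2 ≤ μ * ∑ i, ∑ j ∈ Finset.univ.erase i, |w i| * |w j| := by
    have h1 : ∑ i, (w i ^ 2 + ∑ j ∈ Finset.univ.erase i, w i * w j * (∑ k, D k i * D k j)) = 0 := by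
      rw [← Finset.sum_congr rfl fun i _ => split i]; exact key
    rw [Finset.sum_add_distrib] at h1
    have h2 : -(μ * ∑ i, ∑ j ∈ Finset.univ.erase i, |w i| * |w j|)
        ≤ ∑ i, ∑ j ∈ Finset.univ.erase i, w i * w j * (∑ k, D k i * D k j) := by
      rw [Finset.mul_sum, ← Finset.sum_neg_distrib]
      exact Finset.sum_le_sum fun i _ => hoff i
    linarith
  -- off-diagonal abs sum = (∑|w|)² - ∑ w²
  have habs : ∑ i, ∑ j ∈ Finset.univ.erase i, |w i| * |w j|
      = (∑ i, |w i|) ^ 2 - ∑ i, w i ^ 2 := by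
    have : ∀ i : Fin d, ∑ j ∈ Finset.univ.erase i, |w i| * |w j|
        = (∑ j, |w i| * |w j|) - w i ^ 2 := by
      intro i
      rw [← Finset.add_sum_erase Finset.univ (fun j => |w i| * |w j|) (Finset.mem_univ i)]
      rw [← abs_mul, ← sq, abs_sq]
      ring
    rw [Finset.sum_congr rfl fun i _ => this i, Finset.sum_sub_distrib,
      ← Finset.sum_mul_sum, sq]
  -- L1 vs L2: (∑|w|)² ≤ 2K ∑ w²
  have hS : ((Finset.univ.filter fun j => z j ≠ 0) ∪ (Finset.univ.filter fun j => z' j ≠ 0)).card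
      ≤ 2 * K := by
    calc _ ≤ _ + _ := Finset.card_union_le _ _
    _ ≤ K + K := add_le_add hz hz'
    _ = 2 * K := by ring
  have hl1 : (∑ i, |w i|) ^ 2 ≤ 2 * K * ∑ i, w i ^ 2 := by
    set S := (Finset.univ.filter fun j => z j ≠ 0) ∪ (Finset.univ.filter fun j => z' j ≠ 0) with hSdef
    have hsupp : ∀ i, i ∉ S → |w i| = 0 := by
      intro i hi
      simp only [hSdef, Finset.mem_union, Finset.mem_filter, Finset.mem_univ, true_and,
        not_or, not_not] at hi
      simp [hwdef, hi.1, hi.2]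
    have h1 : ∑ i, |w i| = ∑ i ∈ S, |w i| :=
      (Finset.sum_subset (Finset.subset_univ S) (fun i _ hi => hsupp i hi)).symm
    rw [h1]
    calc (∑ i ∈ S, |w i|) ^ 2 ≤ S.card * ∑ i ∈ S, |w i| ^ 2 := sq_sum_le_card_mul_sum_sq
    _ ≤ (2 * K : ℝ) * ∑ i ∈ S, w i ^ 2 := by
        apply mul_le_mul (by exact_mod_cast hS) (le_of_eq (Finset.sum_congr rfl fun i _ => sq_abs _))
          (Finset.sum_nonneg fun i _ => sq_nonneg _) (by positivity)
    _ ≤ 2 * K * ∑ i, w i ^ 2 := by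
        refine mul_le_mul_of_nonneg_left ?_ (by positivity)
        exact Finset.sum_le_sum_of_subset_of_nonneg (Finset.subset_univ S)
          (fun i _ _ => sq_nonneg _)
  -- ∑ w² > 0
  have hpos : 0 < ∑ i, w i ^ 2 := by
    obtain ⟨i, hi⟩ := Function.ne_iff.mp hw0
    exact Finset.sum_pos' (fun j _ => sq_nonneg _) ⟨i, Finset.mem_univ i, by simpa [sq_abs] using pow_pos (abs_pos.mpr hi) 2⟩
  -- finish
  rw [habs] at comb
  rcases eq_or_lt_of_le hμ0 with hμz | hμpos
  · rw [← hμz] at comb; linarith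
  · have hinv : 1 / μ * μ = 1 := one_div_mul_cancel hμpos.ne'
    have h2Kμ : 2 * (K : ℝ) * μ < 1 + μ := by
      nlinarith [mul_lt_mul_of_pos_right hK hμpos]
    nlinarith
end

section
/- Let D ∈ ℝ^{m×d} be a matrix whose columns f_1, …, f_d all have unit Euclidean norm, and let μ = max_{i≠j} |⟨f_i, f_j⟩| > 0 be its self-coherence. Then every nonzero vector s ∈ ℝ^d with D s = 0 satisfies ‖s‖₀ ≥ 1 + 1/μ. -/
open Finset

/-- A nonzero kernel vector of a unit-norm dictionary with self-coherence μ > 0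
has at least 1 + 1/μ nonzero entries. -/
theorem stmt_6 (m d : ℕ) (D : Matrix (Fin m) (Fin d) ℝ) (μ : ℝ)
    (hunit : ∀ j : Fin d, ∑ k, (D k j) ^ 2 = 1)
    (hμ : IsGreatest {x : ℝ | ∃ i j : Fin d, i ≠ j ∧ x = |∑ k, D k i * D k j|} μ)
    (hμpos : 0 < μ) :
    ∀ s : Fin d → ℝ, s ≠ 0 → D.mulVec s = 0 →
      1 + 1 / μ ≤ ((Finset.univ.filter fun j => s j ≠ 0).card : ℝ) := by
  intro s hs hker
  set S := Finset.univ.filter fun j => s j ≠ 0 with hSdef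
  obtain ⟨j0, hj0⟩ : ∃ j, s j ≠ 0 := by
    by_contra h; push_neg at h; exact hs (funext h)
  obtain ⟨i, -, hi⟩ := Finset.exists_max_image Finset.univ (fun j => |s j|)
    ⟨j0, Finset.mem_univ j0⟩
  have hsi : 0 < |s i| := lt_of_lt_of_le (abs_pos.mpr hj0) (hi j0 (Finset.mem_univ j0))
  have hiS : i ∈ S := by simp [hSdef]; exact abs_pos.mp hsi
  have h1 : ∀ k, ∑ j, D k j * s j = 0 := by
    intro k
    have := congrFun hker k
    simpa [Matrix.mulVec, dotProduct] using this
  have key : ∑ j, (∑ k, D k i * D k j) * s j = 0 := by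
    have : ∑ j, (∑ k, D k i * D k j) * s j = ∑ k, D k i * (∑ j, D k j * s j) := by
      simp_rw [Finset.sum_mul, Finset.mul_sum, mul_assoc]
      rw [Finset.sum_comm]
    rw [this]
    simp [h1]
  have hGi : (∑ k, D k i * D k i) = 1 := by
    simpa [sq] using hunit i
  have hsum : s i = -∑ j ∈ Finset.univ.erase i, (∑ k, D k i * D k j) * s j := by
    rw [← Finset.add_sum_erase _ _ (Finset.mem_univ i), hGi, one_mul] at key
    linarith
  have hbound : |s i| ≤ μ * |s i| * ((S.erase i).card : ℝ) := by
    calc |s i|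
        = |∑ j ∈ Finset.univ.erase i, (∑ k, D k i * D k j) * s j| := by
          rw [hsum, abs_neg]
      _ ≤ ∑ j ∈ Finset.univ.erase i, |(∑ k, D k i * D k j) * s j| :=
          Finset.abs_sum_le_sum_abs _ _
      _ = ∑ j ∈ S.erase i, |(∑ k, D k i * D k j) * s j| := by
          refine (Finset.sum_subset ?_ ?_).symm
          · intro j hj
            simp only [Finset.mem_erase] at hj ⊢
            exact ⟨hj.1, Finset.mem_univ j⟩
          · intro j hj hjS
            have : s j = 0 := by
              by_contra hne
              exact hjS (Finset.mem_erase.mpr ⟨(Finset.mem_erase.mp hj).1,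
                by simp [hSdef, hne]⟩)
            simp [this]
      _ ≤ ∑ j ∈ S.erase i, μ * |s i| := by
          refine Finset.sum_le_sum fun j hj => ?_
          have hji : j ≠ i := (Finset.mem_erase.mp hj).1
          have hG : |∑ k, D k i * D k j| ≤ μ := hμ.2 ⟨i, j, hji.symm, rfl⟩
          rw [abs_mul]
          exact mul_le_mul hG (hi j (Finset.mem_univ j)) (abs_nonneg _)
            (le_of_lt hμpos)
      _ = μ * |s i| * ((S.erase i).card : ℝ) := by
          rw [Finset.sum_const, nsmul_eq_mul, mul_comm]
  have hcard : ((S.erase i).card : ℝ) = (S.card : ℝ) - 1 := by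
    rw [Finset.card_erase_of_mem hiS]
    have hc : 1 ≤ S.card := Finset.card_pos.mpr ⟨i, hiS⟩
    push_cast [hc]
    ring
  rw [hcard] at hbound
  have hmain : 1 ≤ μ * ((S.card : ℝ) - 1) := by nlinarith
  have hdiv : 1 / μ ≤ (S.card : ℝ) - 1 := by
    rw [div_le_iff₀ hμpos]
    nlinarith
  linarith
end

section
/- Let v_1, …, v_p ∈ ℝ^m be unit-norm vectors such that |⟨v_i, v_j⟩| ≤ μ for all i ≠ j, and suppose (p − 1) μ < 1. Then v_1, …, v_p are linearly independent. -/
/-!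
The Gram matrix of the vectors has unit diagonal and off-diagonal row sums at most
`(p - 1) μ < 1`, so it is strictly diagonally dominant and hence nonsingular
(Levy–Desplanques, via Gershgorin); a nonsingular Gram matrix forces linear independence.
-/

open Finset

open scoped InnerProductSpace in
theorem linearIndependent_of_norm_inner_le {𝕜 E ι : Type*} [RCLike 𝕜]
    [SeminormedAddCommGroup E] [InnerProductSpace 𝕜 E] [Fintype ι] [DecidableEq ι]
    {v : ι → E} {μ : ℝ} (hunit : ∀ i, ‖v i‖ = 1)
    (hcoh : ∀ i j, i ≠ j → ‖⟪v i, v j⟫_𝕜‖ ≤ μ) (hμ : ((Fintype.card ι : ℝ) - 1) * μ < 1) :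
    LinearIndependent 𝕜 v := by
  refine Matrix.linearIndependent_of_det_gram_ne_zero <| det_ne_zero_of_sum_row_lt_diag
    fun k ↦ ?_
  have hdiag : ‖⟪v k, v k⟫_𝕜‖ = 1 := by simp [inner_self_eq_norm_sq_to_K, hunit]
  calc ∑ j ∈ univ.erase k, ‖⟪v k, v j⟫_𝕜‖
      ≤ ∑ j ∈ univ.erase k, μ := sum_le_sum fun j hj ↦ hcoh k j (ne_of_mem_erase hj).symm
    _ = ((Fintype.card ι : ℝ) - 1) * μ := by
      rw [sum_const, card_erase_of_mem (mem_univ k), nsmul_eq_mul, card_univ,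
        Nat.cast_pred (Fintype.card_pos_iff.mpr ⟨k⟩)]
    _ < ‖⟪v k, v k⟫_𝕜‖ := hdiag ▸ hμ

/-- Unit-norm vectors with pairwise coherence μ satisfying (p - 1) μ < 1 are
linearly independent. -/
theorem stmt_8 (m p : ℕ) (v : Fin p → Fin m → ℝ) (μ : ℝ)
    (hunit : ∀ i : Fin p, ∑ k, (v i k) ^ 2 = 1)
    (hcoh : ∀ i j : Fin p, i ≠ j → |∑ k, v i k * v j k| ≤ μ)
    (hμ : ((p : ℝ) - 1) * μ < 1) :
    LinearIndependent ℝ v := by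
  set w : Fin p → EuclideanSpace ℝ (Fin m) := fun i ↦ WithLp.toLp 2 (v i)
  have hw : LinearIndependent ℝ w := by
    refine linearIndependent_of_norm_inner_le (μ := μ) (fun i ↦ ?_) (fun i j hij ↦ ?_) ?_
    · simp [w, EuclideanSpace.norm_eq, hunit]
    · simpa [w, EuclideanSpace.inner_toLp_toLp, dotProduct, mul_comm] using hcoh i j hij
    · simpa using hμ
  exact hw.map' (WithLp.linearEquiv 2 ℝ (Fin m → ℝ)).toLinearMap (LinearEquiv.ker _)
end

section
/- Let f_1, …, f_d ∈ ℝ^m be unit-norm vectors with d ≥ 2, and let s be a positive integer. Then the mean similarity satisfies the Welch bound: (1/d²) · Σ_{i=1}^d Σ_{j=1}^d |⟨f_i, f_j⟩|^{2s} ≥ 1 / C(m + s − 1, s), where C(m + s − 1, s) denotes the binomial coefficient. -/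
open Finset

private lemma welch_card (m s : ℕ) :
    (piAntidiag (univ : Finset (Fin m)) s).card = (m + s - 1).choose s := by
  classical
  rw [← map_sym_eq_piAntidiag (univ : Finset (Fin m)) s, Finset.card_map]
  have huniv : (univ : Finset (Fin m)).sym s = (univ : Finset (Sym (Fin m) s)) := by
    ext x; simp [Finset.mem_sym_iff]
  rw [huniv, ← Fintype.card, Sym.card_sym_eq_choose, Fintype.card_fin]

/-- Welch bound on the mean similarity of unit-norm vectors. -/
theorem stmt_10 (m d s : ℕ) (f : Fin d → Fin m → ℝ)
    (hunit : ∀ j : Fin d, ∑ k, (f j k) ^ 2 = 1)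
    (hd : 2 ≤ d) (hs : 0 < s) :
    1 / ((m + s - 1).choose s : ℝ) ≤
      (1 / (d : ℝ) ^ 2) * ∑ i : Fin d, ∑ j : Fin d, |∑ k, f i k * f j k| ^ (2 * s) := by
  classical
  -- m = 0 is contradictory
  rcases Nat.eq_zero_or_pos m with hm | hm
  · exfalso
    have := hunit ⟨0, lt_of_lt_of_le (by norm_num) hd⟩
    subst hm
    simp at this
  set N := piAntidiag (univ : Finset (Fin m)) s with hN
  set g : (Fin m → ℕ) → Fin d → ℝ :=
    fun a i => Real.sqrt (Nat.multinomial univ a) * ∏ k, f i k ^ a k with hg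
  -- key identity
  have key : ∀ i j : Fin d, ∑ a ∈ N, g a i * g a j = (∑ k, f i k * f j k) ^ s := by
    intro i j
    rw [Finset.sum_pow_eq_sum_piAntidiag (univ : Finset (Fin m)) (fun k => f i k * f j k) s]
    refine Finset.sum_congr rfl fun a _ => ?_
    simp only [hg]
    rw [mul_mul_mul_comm, Real.mul_self_sqrt (by positivity), ← Finset.prod_mul_distrib]
    simp_rw [← mul_pow]
  set B : (Fin m → ℕ) → (Fin m → ℕ) → ℝ := fun a b => ∑ i, g a i * g b i with hB
  -- trace = d
  have trace : ∑ a ∈ N, B a a = d := by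
    simp only [hB]
    rw [Finset.sum_comm]
    have h1 : ∀ i : Fin d, ∑ a ∈ N, g a i * g a i = 1 := by
      intro i
      rw [key i i]
      have : ∑ k, f i k * f i k = 1 := by
        simpa [sq] using hunit i
      rw [this, one_pow]
    rw [Finset.sum_congr rfl fun i _ => h1 i]
    simp
  -- sum of squares identity
  have sqsum : ∑ a ∈ N, ∑ b ∈ N, (B a b) ^ 2
      = ∑ i : Fin d, ∑ j : Fin d, |∑ k, f i k * f j k| ^ (2 * s) := by
    have h1 : ∑ a ∈ N, ∑ b ∈ N, (B a b) ^ 2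
        = ∑ p ∈ N ×ˢ N, ∑ q ∈ (univ ×ˢ univ : Finset (Fin d × Fin d)),
            (g p.1 q.1 * g p.2 q.1) * (g p.1 q.2 * g p.2 q.2) := by
      rw [Finset.sum_product]
      refine Finset.sum_congr rfl fun a _ => Finset.sum_congr rfl fun b _ => ?_
      rw [Finset.sum_product]
      simp only [hB, sq, Finset.sum_mul_sum]
    have h2 : ∑ i : Fin d, ∑ j : Fin d, |∑ k, f i k * f j k| ^ (2 * s)
        = ∑ q ∈ (univ ×ˢ univ : Finset (Fin d × Fin d)), ∑ p ∈ N ×ˢ N,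
            (g p.1 q.1 * g p.2 q.1) * (g p.1 q.2 * g p.2 q.2) := by
      rw [Finset.sum_product]
      refine Finset.sum_congr rfl fun i _ => Finset.sum_congr rfl fun j _ => ?_
      rw [Finset.sum_product]
      have habs : |∑ k, f i k * f j k| ^ (2 * s) = ((∑ k, f i k * f j k) ^ s) ^ 2 := by
        rw [← pow_mul, mul_comm s 2, pow_mul, sq_abs, ← pow_mul, mul_comm 2 s, pow_mul]
      rw [habs, ← key i j, sq, Finset.sum_mul_sum]
      refine Finset.sum_congr rfl fun a _ => Finset.sum_congr rfl fun b _ => ?_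
      ring
    rw [h1, h2]
    exact Finset.sum_comm
  -- Cauchy-Schwarz on the diagonal
  have cs : ((d : ℝ)) ^ 2 ≤ (N.card : ℝ) * ∑ a ∈ N, ∑ b ∈ N, (B a b) ^ 2 := by
    calc ((d : ℝ)) ^ 2 = (∑ a ∈ N, B a a) ^ 2 := by rw [trace]
      _ ≤ (N.card : ℝ) * ∑ a ∈ N, (B a a) ^ 2 := sq_sum_le_card_mul_sum_sq
      _ ≤ (N.card : ℝ) * ∑ a ∈ N, ∑ b ∈ N, (B a b) ^ 2 := by
          refine mul_le_mul_of_nonneg_left ?_ (by positivity)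
          refine Finset.sum_le_sum fun a ha => ?_
          exact Finset.single_le_sum (f := fun b => (B a b) ^ 2)
            (fun b _ => sq_nonneg _) ha
  rw [hN, welch_card m s] at cs
  rw [sqsum] at cs
  set S := ∑ i : Fin d, ∑ j : Fin d, |∑ k, f i k * f j k| ^ (2 * s) with hS
  have hC : (0 : ℝ) < ((m + s - 1).choose s : ℝ) := by
    have : s ≤ m + s - 1 := by omega
    exact_mod_cast Nat.choose_pos this
  have hd0 : (0 : ℝ) < (d : ℝ) ^ 2 := by
    have : (0:ℕ) < d := lt_of_lt_of_le (by norm_num) hd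
    positivity
  rw [div_le_iff₀ hC]
  have hrw : 1 / (d : ℝ) ^ 2 * S * ((m + s - 1).choose s : ℝ)
      = ((m + s - 1).choose s : ℝ) * S / (d : ℝ) ^ 2 := by ring
  rw [hrw, le_div_iff₀ hd0, one_mul]
  exact cs
end

section
/- Let f_1, …, f_d ∈ ℝ^m be unit-norm vectors with d ≥ 2, let s be a positive integer, and let μ̂ = max_{i≠j} |⟨f_i, f_j⟩| be the maximum pairwise similarity. Then the Welch bound holds: μ̂^{2s} ≥ (1/(d − 1)) · ( d / C(m + s − 1, s) − 1 ), where C(m + s − 1, s) denotes the binomial coefficient. -/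
open Finset

/-- Welch bound on the maximum pairwise similarity of unit-norm vectors. -/
theorem stmt_11 (m d s : ℕ) (f : Fin d → Fin m → ℝ) (μ : ℝ)
    (hunit : ∀ j : Fin d, ∑ k, (f j k) ^ 2 = 1)
    (hd : 2 ≤ d) (hs : 0 < s)
    (hμ : IsGreatest {x : ℝ | ∃ i j : Fin d, i ≠ j ∧ x = |∑ k, f i k * f j k|} μ) :
    (1 / ((d : ℝ) - 1)) * ((d : ℝ) / ((m + s - 1).choose s : ℝ) - 1) ≤ μ ^ (2 * s) := by
  classical
  -- m is positive
  have hm : 0 < m := by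
    by_contra hm
    push_neg at hm
    interval_cases m
    have := hunit ⟨0, by omega⟩
    simp at this
  -- notation
  set S : Finset (Fin m → ℕ) := Finset.piAntidiag Finset.univ s with hS
  set g : Fin d → (Fin m → ℕ) → ℝ := fun i α => ∏ k, f i k ^ α k with hg
  set c : (Fin m → ℕ) → ℝ := fun α => (Nat.multinomial Finset.univ α : ℝ) with hc
  have hcnn : ∀ α, 0 ≤ c α := fun α => Nat.cast_nonneg _
  -- inner products
  set ip : Fin d → Fin d → ℝ := fun i j => ∑ k, f i k * f j k with hip
  have key : ∀ i j, (ip i j) ^ s = ∑ α ∈ S, c α * (g i α * g j α) := by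
    intro i j
    rw [hip, Finset.sum_pow_eq_sum_piAntidiag]
    refine Finset.sum_congr rfl fun α _ => ?_
    simp [hc, hg, ← Finset.prod_mul_distrib, mul_pow]
  have hipii : ∀ i, ip i i = 1 := by
    intro i
    rw [hip]
    simpa [sq] using hunit i
  have one_eq : ∀ i, ∑ α ∈ S, c α * (g i α * g i α) = 1 := by
    intro i
    rw [← key i i, hipii i, one_pow]
  -- expansion of the 2s power
  have expand : ∀ i j, (ip i j) ^ (2 * s) =
      ∑ q ∈ S ×ˢ S, (c q.1 * c q.2) * ((g i q.1 * g i q.2) * (g j q.1 * g j q.2)) := by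
    intro i j
    rw [show 2 * s = s * 2 by ring, pow_mul, sq, key i j, Finset.sum_mul_sum,
      Finset.sum_product]
    refine Finset.sum_congr rfl fun α _ => Finset.sum_congr rfl fun β _ => ?_
    ring
  -- total double sum
  set T : ℝ := ∑ i, ∑ j, (ip i j) ^ (2 * s) with hT
  have swap : ∀ (F : Fin d → Fin d → (Fin m → ℕ) × (Fin m → ℕ) → ℝ),
      ∑ i, ∑ j, ∑ q ∈ S ×ˢ S, F i j q = ∑ q ∈ S ×ˢ S, ∑ i, ∑ j, F i j q := by
    intro F
    calc ∑ i, ∑ j, ∑ q ∈ S ×ˢ S, F i j q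
        = ∑ i, ∑ q ∈ S ×ˢ S, ∑ j, F i j q :=
          Finset.sum_congr rfl fun i _ => Finset.sum_comm
      _ = ∑ q ∈ S ×ˢ S, ∑ i, ∑ j, F i j q := Finset.sum_comm
  have Teq : T = ∑ q ∈ S ×ˢ S, (c q.1 * c q.2) * (∑ i, g i q.1 * g i q.2) ^ 2 := by
    rw [hT]
    simp_rw [expand]
    rw [swap]
    refine Finset.sum_congr rfl fun q _ => ?_
    rw [sq, Finset.sum_mul_sum]
    simp only [Finset.mul_sum]
  -- diagonal lower bound
  have diag_le : ∑ α ∈ S, (c α * (∑ i, g i α * g i α)) ^ 2 ≤ T := by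
    rw [Teq]
    have himg : (S.image fun α => (α, α)) ⊆ S ×ˢ S := by
      intro q hq
      simp only [Finset.mem_image] at hq
      obtain ⟨α, hα, rfl⟩ := hq
      exact Finset.mem_product.2 ⟨hα, hα⟩
    calc ∑ α ∈ S, (c α * (∑ i, g i α * g i α)) ^ 2
        = ∑ q ∈ S.image (fun α => (α, α)),
            (c q.1 * c q.2) * (∑ i, g i q.1 * g i q.2) ^ 2 := by
          rw [Finset.sum_image (by intro a _ b _ h; exact congrArg Prod.fst h)]
          exact Finset.sum_congr rfl fun α _ => by ring
      _ ≤ ∑ q ∈ S ×ˢ S, (c q.1 * c q.2) * (∑ i, g i q.1 * g i q.2) ^ 2 := by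
          refine Finset.sum_le_sum_of_subset_of_nonneg himg fun q _ _ => ?_
          have := mul_nonneg (hcnn q.1) (hcnn q.2)
          positivity
  -- trace equals d
  have trace_eq : ∑ α ∈ S, c α * (∑ i, g i α * g i α) = (d : ℝ) := by
    simp_rw [Finset.mul_sum]
    rw [Finset.sum_comm]
    simp_rw [one_eq]
    simp
  -- cardinality of S
  have cardS : (S.card : ℝ) = ((m + s - 1).choose s : ℕ) := by
    have h1 : S.card = Fintype.card (Sym (Fin m) s) := by
      rw [hS, ← Finset.map_sym_eq_piAntidiag, Finset.card_map, Finset.sym_univ,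
        Finset.card_univ]
    rw [h1, Sym.card_sym_eq_choose, Fintype.card_fin]
  have hchoosepos : 0 < (m + s - 1).choose s := Nat.choose_pos (by omega)
  set N : ℝ := ((m + s - 1).choose s : ℝ) with hN
  have hNpos : (0 : ℝ) < N := by
    rw [hN]; exact_mod_cast hchoosepos
  -- Cauchy-Schwarz
  have cs : ((d : ℝ)) ^ 2 ≤ N * T := by
    have := sq_sum_le_card_mul_sum_sq (s := S)
      (f := fun α => c α * (∑ i, g i α * g i α))
    rw [trace_eq] at this
    calc ((d : ℝ)) ^ 2 ≤ (S.card : ℝ) * ∑ α ∈ S, (c α * (∑ i, g i α * g i α)) ^ 2 := this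
      _ ≤ N * T := by
          rw [cardS]
          exact mul_le_mul_of_nonneg_left diag_le (le_of_lt hNpos)
  -- upper bound on T via μ
  have hμ0 : 0 ≤ μ := by
    obtain ⟨i, j, hij, h⟩ := hμ.1
    rw [h]; exact abs_nonneg _
  have hoff : ∀ i j : Fin d, i ≠ j → (ip i j) ^ (2 * s) ≤ μ ^ (2 * s) := by
    intro i j hij
    have hle : |ip i j| ≤ μ := hμ.2 ⟨i, j, hij, rfl⟩
    calc (ip i j) ^ (2 * s) = |ip i j| ^ (2 * s) :=
          (Even.pow_abs (even_two_mul s) _).symm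
      _ ≤ μ ^ (2 * s) := pow_le_pow_left₀ (abs_nonneg _) hle _
  have Tub : T ≤ (d : ℝ) * (1 + ((d : ℝ) - 1) * μ ^ (2 * s)) := by
    rw [hT]
    have hrow : ∀ i : Fin d, ∑ j, (ip i j) ^ (2 * s) ≤ 1 + ((d : ℝ) - 1) * μ ^ (2 * s) := by
      intro i
      rw [← Finset.add_sum_erase _ _ (Finset.mem_univ i)]
      have h1 : (ip i i) ^ (2 * s) = 1 := by rw [hipii i, one_pow]
      rw [h1]
      gcongr 1 + ?_
      calc ∑ j ∈ Finset.univ.erase i, (ip i j) ^ (2 * s)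
          ≤ ∑ j ∈ Finset.univ.erase i, μ ^ (2 * s) := by
            refine Finset.sum_le_sum fun j hj => ?_
            exact hoff i j (Ne.symm (Finset.mem_erase.1 hj).1)
        _ = ((d : ℝ) - 1) * μ ^ (2 * s) := by
            rw [Finset.sum_const, Finset.card_erase_of_mem (Finset.mem_univ i),
              Finset.card_univ, Fintype.card_fin, nsmul_eq_mul]
            congr 1
            have : (1 : ℕ) ≤ d := by omega
            push_cast [Nat.cast_sub this]
            ring
    calc ∑ i, ∑ j, (ip i j) ^ (2 * s) ≤ ∑ i : Fin d, (1 + ((d : ℝ) - 1) * μ ^ (2 * s)) :=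
          Finset.sum_le_sum fun i _ => hrow i
      _ = (d : ℝ) * (1 + ((d : ℝ) - 1) * μ ^ (2 * s)) := by
          rw [Finset.sum_const, Finset.card_univ, Fintype.card_fin, nsmul_eq_mul]
  -- combine
  have hdpos : (0 : ℝ) < (d : ℝ) := by
    exact_mod_cast (by omega : 0 < d)
  have hd1 : (1 : ℝ) < (d : ℝ) := by exact_mod_cast (by omega : 1 < d)
  have h1 : ((d : ℝ)) ^ 2 ≤ N * ((d : ℝ) * (1 + ((d : ℝ) - 1) * μ ^ (2 * s))) :=
    cs.trans (mul_le_mul_of_nonneg_left Tub hNpos.le)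
  have h2 : (d : ℝ) ≤ N * (1 + ((d : ℝ) - 1) * μ ^ (2 * s)) := by nlinarith [h1, hdpos, hNpos]
  have goal' : (d : ℝ) / N - 1 ≤ ((d : ℝ) - 1) * μ ^ (2 * s) := by
    rw [sub_le_iff_le_add, div_le_iff₀ hNpos]
    nlinarith [h2]
  calc (1 / ((d : ℝ) - 1)) * ((d : ℝ) / N - 1)
      ≤ (1 / ((d : ℝ) - 1)) * (((d : ℝ) - 1) * μ ^ (2 * s)) := by
        exact mul_le_mul_of_nonneg_left goal' (div_nonneg zero_le_one (by linarith))
    _ = μ ^ (2 * s) := by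
        field_simp
        exact mul_div_cancel_left₀ _ (by linarith : ((d : ℝ) - 1) ≠ 0)
end

section
/- Let D ∈ ℝ^{m×d} be a matrix whose columns f_1, …, f_d all have unit Euclidean norm and self-coherence μ = max_{i≠j} |⟨f_i, f_j⟩|, let T ⊆ {1, …, d} be a set of column indices with |T| = n, and let G = D_Tᵀ D_T be the Gram matrix of the columns indexed by T. Then G is symmetric, G_{jj} = 1 for every j, and |G_{ij}| ≤ μ for all i ≠ j; consequently, if (n − 1) μ < 1, every eigenvalue of G is at least 1 − (n − 1) μ > 0 and the columns of D indexed by T are linearly independent. -/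
open Finset Matrix

/-- Properties of the Gram matrix of a subset of columns of a unit-norm
dictionary, and the resulting eigenvalue bound and linear independence. -/
theorem stmt_13 (m d n : ℕ) (D : Matrix (Fin m) (Fin d) ℝ) (μ : ℝ)
    (hunit : ∀ j : Fin d, ∑ k, (D k j) ^ 2 = 1)
    (hμ : IsGreatest {x : ℝ | ∃ i j : Fin d, i ≠ j ∧ x = |∑ k, D k i * D k j|} μ)
    (T : Finset (Fin d)) (hT : T.card = n)
    (G : Matrix T T ℝ)
    (hG : ∀ i j : T, G i j = ∑ k, D k i * D k j) :
    G.IsSymm ∧ (∀ j : T, G j j = 1) ∧ (∀ i j : T, i ≠ j → |G i j| ≤ μ) ∧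
    (((n : ℝ) - 1) * μ < 1 →
      (0 < 1 - ((n : ℝ) - 1) * μ ∧
        ∀ (lam : ℝ) (v : T → ℝ), v ≠ 0 → G.mulVec v = lam • v →
          1 - ((n : ℝ) - 1) * μ ≤ lam) ∧
      LinearIndependent ℝ (fun j : T => D.transpose j)) := by
  have hμ0 : 0 ≤ μ := by
    obtain ⟨i, j, hij, hx⟩ := hμ.1
    rw [hx]; exact abs_nonneg _
  have hsymm : G.IsSymm := by
    ext i j
    simp only [Matrix.transpose_apply]
    rw [hG, hG]
    exact Finset.sum_congr rfl (fun k _ => mul_comm _ _)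
  have hdiag : ∀ j : T, G j j = 1 := by
    intro j
    rw [hG]
    simpa [pow_two] using hunit j
  have hoff : ∀ i j : T, i ≠ j → |G i j| ≤ μ := by
    intro i j hij
    exact hμ.2 ⟨i, j, fun h => hij (Subtype.ext h), by rw [hG]⟩
  refine ⟨hsymm, hdiag, hoff, ?_⟩
  intro hlt
  have hmain : ∀ (lam : ℝ) (v : T → ℝ), v ≠ 0 → G.mulVec v = lam • v →
      1 - ((n : ℝ) - 1) * μ ≤ lam := by
    intro lam v hv hev
    rcases isEmpty_or_nonempty T with h | h
    · exact absurd (funext fun i => (h.false i).elim) hv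
    obtain ⟨i, -, hmax⟩ := Finset.exists_max_image (univ : Finset T)
      (fun j => |v j|) univ_nonempty
    have hvi : 0 < |v i| := by
      obtain ⟨j, hj⟩ := Function.ne_iff.mp hv
      exact lt_of_lt_of_le (abs_pos.mpr hj) (hmax j (mem_univ j))
    have heq : (lam - 1) * v i = ∑ j ∈ univ.erase i, G i j * v j := by
      have h1 : ∑ j : T, G i j * v j = lam * v i := by
        have := congrFun hev i
        simpa [Matrix.mulVec, dotProduct] using this
      have h2 : ∑ j : T, G i j * v j = G i i * v i + ∑ j ∈ univ.erase i, G i j * v j :=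
        (Finset.add_sum_erase _ _ (mem_univ i)).symm
      rw [hdiag i, h1] at h2
      linear_combination h2
    have hn1 : 1 ≤ n := by
      rw [← hT]; exact Finset.card_pos.mpr ⟨(h.some : Fin d), h.some.2⟩
    have hbound : |lam - 1| * |v i| ≤ ((n : ℝ) - 1) * μ * |v i| := by
      rw [← abs_mul, heq]
      calc |∑ j ∈ univ.erase i, G i j * v j|
          ≤ ∑ j ∈ univ.erase i, |G i j * v j| := Finset.abs_sum_le_sum_abs _ _
        _ ≤ ∑ _j ∈ univ.erase i, μ * |v i| := by
            apply Finset.sum_le_sum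
            intro j hj
            rw [abs_mul]
            exact mul_le_mul (hoff i j (Finset.ne_of_mem_erase hj).symm)
              (hmax j (mem_univ j)) (abs_nonneg _) hμ0
        _ = ((univ.erase i).card : ℝ) * (μ * |v i|) := by
            rw [Finset.sum_const, nsmul_eq_mul]
        _ = ((n : ℝ) - 1) * μ * |v i| := by
            rw [Finset.card_erase_of_mem (mem_univ i), Finset.card_univ,
              Fintype.card_coe, hT, Nat.cast_sub hn1]
            push_cast
            ring
    have habs : |lam - 1| ≤ ((n : ℝ) - 1) * μ := le_of_mul_le_mul_right hbound hvi
    have hneg := neg_abs_le (lam - 1)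
    linarith
  refine ⟨⟨by linarith, hmain⟩, ?_⟩
  rw [Fintype.linearIndependent_iff]
  intro g hg
  by_contra hne
  push_neg at hne
  obtain ⟨i0, hi0⟩ := hne
  have hg0 : g ≠ 0 := fun h => hi0 (congrFun h i0)
  have hk : ∀ k : Fin m, ∑ j : T, g j * D k ↑j = 0 := by
    intro k
    simpa [Finset.sum_apply, Matrix.transpose_apply] using congrFun hg k
  have hmv : G.mulVec g = (0 : ℝ) • g := by
    ext i
    simp only [Matrix.mulVec, dotProduct, Pi.smul_apply, smul_eq_mul, zero_mul]
    have hswap : ∑ j : T, G i j * g j = ∑ k : Fin m, D k ↑i * ∑ j : T, g j * D k ↑j := by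
      simp_rw [hG, Finset.mul_sum, Finset.sum_mul]
      rw [Finset.sum_comm]
      exact Finset.sum_congr rfl fun k _ => Finset.sum_congr rfl fun j _ => by ring
    rw [hswap]
    simp only [Finset.univ_eq_attach] at hk
    simp [hk]
  have := hmain 0 g hg0 hmv
  linarith
end
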